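/- Let G be a finite 3-regular simple graph and e = uv an edge of G. Let G' be the graph obtained from G by deleting the edge e and adding three new vertices v', v'', v''' together with the edges vv', v'v'', and v'v'''. Then reg(G') = 3 if and only if the graph G − e (G with the edge e removed) has a proper edge coloring with 3 colors. -/

import Mathlib

open SimpleGraph

variable {V : Type*}

/-- The number of edges of the edge set `F` incident with the vertex `v`. -/
noncomputable def edgeDeg (F : Set (Sym2 V)) (v : V) : ℕ := {e ∈ F | v ∈ e}.ncard

/-- The subgraph induced by the edge set `F` (on the vertices incident with edges of `F`)
is `r`-regular: every vertex incident with an edge of `F` lies on exactly `r` edges of `F`. -/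
def IsRegularEdgeSet (F : Set (Sym2 V)) (r : ℕ) : Prop :=
  ∀ v : V, (∃ e ∈ F, v ∈ e) → edgeDeg F v = r

/-- `P` is a partition of the edge set of `G` into `t` nonempty parts, each of which
induces a regular subgraph. -/
def IsRegularPartition (G : SimpleGraph V) {t : ℕ} (P : Fin t → Set (Sym2 V)) : Prop :=
  (∀ i, (P i).Nonempty) ∧ (∀ i j, i ≠ j → Disjoint (P i) (P j)) ∧
    (⋃ i, P i) = G.edgeSet ∧ ∀ i, ∃ r, IsRegularEdgeSet (P i) r

/-- The regular number of `G`: the minimum number of parts in a partition of the edge set of `G`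
into nonempty subsets each of which induces a regular subgraph. -/
noncomputable def regNum (G : SimpleGraph V) : ℕ :=
  sInf {t | ∃ P : Fin t → Set (Sym2 V), IsRegularPartition G P}

/-- `C` is a proper edge coloring of `G` with `n` colors: edges sharing a vertex get
distinct colors. -/
def IsProperEdgeColoring (G : SimpleGraph V) {n : ℕ} (C : Sym2 V → Fin n) : Prop :=
  ∀ e₁ ∈ G.edgeSet, ∀ e₂ ∈ G.edgeSet, e₁ ≠ e₂ → (∃ x, x ∈ e₁ ∧ x ∈ e₂) → C e₁ ≠ C e₂

/-- The edge chromatic number of `G`: the minimum number of colors of a proper edge coloring. -/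
noncomputable def edgeChromNum (G : SimpleGraph V) : ℕ :=
  sInf {n | ∃ C : Sym2 V → Fin n, IsProperEdgeColoring G C}

/-- The graph `G'` obtained from `G` by deleting the edge `uv` and adding three new
vertices `v' = Sum.inr 0`, `v'' = Sum.inr 1`, `v''' = Sum.inr 2` together with the edges
`v v'`, `v' v''` and `v' v'''`. -/
def modifiedGraph (G : SimpleGraph V) (u v : V) : SimpleGraph (V ⊕ Fin 3) :=
  SimpleGraph.fromRel (fun p q =>
    match p, q with
    | Sum.inl a, Sum.inl b => G.Adj a b ∧ s(a, b) ≠ s(u, v)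
    | Sum.inl a, Sum.inr c => a = v ∧ c = 0
    | Sum.inr c, Sum.inr d => c = 0 ∧ d ≠ 0
    | _, _ => False)

/-!
In any regular partition of `G'` the three edges at `v'` lie in three different parts, each of
them a matching: the parts of the pendant edges `v'v''`, `v'v'''` are 1-regular since `v''`,
`v'''` are leaves, so they cannot contain a second edge at `v'`, and then `v'` has degree one in
the part of `vv'`. Hence `reg(G') ≥ 3`, and a partition into three parts is a proper
3-edge-colouring of `G'`, which restricts to `G - e`. Conversely, `v` has degree 2 in `G - e`,
so a 3-edge-colouring of `G - e` misses some colour `c` at `v`; giving `vv'` the colour `c` and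
the pendant edges the other two yields a proper colouring of `G'` using all three colours,
whose colour classes form a regular partition into three parts.
-/

section RegularEdgeSet

variable {W : Type*}

lemma edgeDeg_eq_one {F : Set (Sym2 W)} {w : W} {e : Sym2 W} (he : e ∈ F) (hw : w ∈ e)
    (huniq : ∀ e' ∈ F, w ∈ e' → e' = e) : edgeDeg F w = 1 := by
  have : {e' ∈ F | w ∈ e'} = {e} :=
    Set.eq_singleton_iff_unique_mem.2 ⟨⟨he, hw⟩, fun e' he' => huniq e' he'.1 he'.2⟩
  simp [edgeDeg, this]

lemma IsRegularEdgeSet.eq_one_of_unique {F : Set (Sym2 W)} {r : ℕ} (hF : IsRegularEdgeSet F r)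
    {w : W} {e : Sym2 W} (he : e ∈ F) (hw : w ∈ e) (huniq : ∀ e' ∈ F, w ∈ e' → e' = e) :
    r = 1 :=
  (hF w ⟨e, he, hw⟩).symm.trans (edgeDeg_eq_one he hw huniq)

lemma IsRegularEdgeSet.eq_of_mem_of_mem {F : Set (Sym2 W)} (hF : IsRegularEdgeSet F 1)
    {w : W} {a b : Sym2 W} (ha : a ∈ F) (hb : b ∈ F) (hwa : w ∈ a) (hwb : w ∈ b) : a = b := by
  obtain ⟨c, hc⟩ := Set.ncard_eq_one.1 (hF w ⟨a, ha, hwa⟩)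
  have ha' : a ∈ ({c} : Set (Sym2 W)) := hc ▸ ⟨ha, hwa⟩
  have hb' : b ∈ ({c} : Set (Sym2 W)) := hc ▸ ⟨hb, hwb⟩
  exact ha'.trans hb'.symm

end RegularEdgeSet

section Coloring

variable {W W' : Type*} {H : SimpleGraph W} {n : ℕ}

lemma IsRegularPartition.exists_mem {P : Fin n → Set (Sym2 W)} (hP : IsRegularPartition H P)
    {e : Sym2 W} (he : e ∈ H.edgeSet) : ∃ i, e ∈ P i :=
  Set.mem_iUnion.1 (hP.2.2.1 ▸ he)

lemma IsRegularPartition.eq_of_mem_of_mem {P : Fin n → Set (Sym2 W)}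
    (hP : IsRegularPartition H P) {e : Sym2 W} {i j : Fin n} (hi : e ∈ P i) (hj : e ∈ P j) :
    i = j := by
  by_contra hij
  exact Set.disjoint_left.1 (hP.2.1 i j hij) hi hj

lemma IsRegularPartition.mem_edgeSet {P : Fin n → Set (Sym2 W)} (hP : IsRegularPartition H P)
    {e : Sym2 W} {i : Fin n} (he : e ∈ P i) : e ∈ H.edgeSet :=
  hP.2.2.1 ▸ Set.mem_iUnion_of_mem i he

lemma IsRegularPartition.isRegularEdgeSet_one_of_unique {P : Fin n → Set (Sym2 W)}
    (hP : IsRegularPartition H P) {i : Fin n} {w : W} {e : Sym2 W} (he : e ∈ P i) (hw : w ∈ e)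
    (huniq : ∀ e' ∈ P i, w ∈ e' → e' = e) : IsRegularEdgeSet (P i) 1 := by
  obtain ⟨r, hr⟩ := hP.2.2.2 i
  exact hr.eq_one_of_unique he hw huniq ▸ hr

lemma IsRegularPartition.exists_isProperEdgeColoring [NeZero n] {P : Fin n → Set (Sym2 W)}
    (hP : IsRegularPartition H P) (hmatch : ∀ i, IsRegularEdgeSet (P i) 1) :
    ∃ C : Sym2 W → Fin n, IsProperEdgeColoring H C := by
  classical
  refine ⟨fun e => if h : ∃ i, e ∈ P i then h.choose else 0, ?_⟩
  rintro e₁ he₁ e₂ he₂ hne ⟨w, hw₁, hw₂⟩ hcol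
  have h₁ := hP.exists_mem he₁
  have h₂ := hP.exists_mem he₂
  simp only [dif_pos h₁, dif_pos h₂] at hcol
  exact hne <| (hmatch _).eq_of_mem_of_mem h₁.choose_spec (hcol ▸ h₂.choose_spec) hw₁ hw₂

lemma IsProperEdgeColoring.isRegularPartition {C : Sym2 W → Fin n}
    (hC : IsProperEdgeColoring H C) (hsurj : ∀ i, ∃ e ∈ H.edgeSet, C e = i) :
    IsRegularPartition H fun i => {e ∈ H.edgeSet | C e = i} := by
  refine ⟨fun i => hsurj i, ?_, ?_, fun i => ⟨1, ?_⟩⟩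
  · intro i j hij
    exact Set.disjoint_left.2 fun e hi hj => hij (hi.2.symm.trans hj.2)
  · ext e
    simp
  · rintro w ⟨e, ⟨he, rfl⟩, hw⟩
    refine edgeDeg_eq_one ⟨he, rfl⟩ hw fun e' he' hw' => ?_
    by_contra hne
    exact hC e' he'.1 e he hne ⟨w, hw', hw⟩ he'.2

lemma regNum_le_of_isProperEdgeColoring {C : Sym2 W → Fin n} (hC : IsProperEdgeColoring H C)
    (hsurj : ∀ i, ∃ e ∈ H.edgeSet, C e = i) : regNum H ≤ n :=
  Nat.sInf_le ⟨_, hC.isRegularPartition hsurj⟩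

lemma exists_isRegularPartition_of_regNum_eq (h : regNum H = n) (hn : 0 < n) :
    ∃ P : Fin n → Set (Sym2 W), IsRegularPartition H P :=
  h ▸ Nat.sInf_mem (Nat.nonempty_of_pos_sInf (h ▸ hn))

lemma IsProperEdgeColoring.comp_map {H' : SimpleGraph W'} {C : Sym2 W' → Fin n}
    (hC : IsProperEdgeColoring H' C) (f : H →g H') (hf : Function.Injective f) :
    IsProperEdgeColoring H (C ∘ Sym2.map f) := by
  rintro e₁ he₁ e₂ he₂ hne ⟨w, hw₁, hw₂⟩
  exact hC _ (f.map_mem_edgeSet he₁) _ (f.map_mem_edgeSet he₂)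
    ((Sym2.map.injective hf).ne hne)
    ⟨f w, Sym2.mem_map.2 ⟨w, hw₁, rfl⟩, Sym2.mem_map.2 ⟨w, hw₂, rfl⟩⟩

lemma exists_ne_of_ncard_incidenceSet_lt [Finite W] (C : Sym2 W → Fin n) {w : W}
    (h : (H.incidenceSet w).ncard < n) : ∃ c, ∀ e ∈ H.incidenceSet w, C e ≠ c := by
  by_contra! hall
  have hall_colors : (Set.univ : Set (Fin n)) ⊆ C '' H.incidenceSet w := fun c _ => hall c
  have hcard := Set.ncard_le_ncard hall_colors (Set.toFinite _)
  rw [Set.ncard_univ, Nat.card_eq_fintype_card, Fintype.card_fin] at hcard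
  exact (hcard.trans (Set.ncard_image_le (Set.toFinite _))).not_gt h

end Coloring

lemma SimpleGraph.IsRegularOfDegree.ncard_incidenceSet_deleteEdges [Fintype V]
    {G : SimpleGraph V} [DecidableRel G.Adj] {d : ℕ} (hreg : G.IsRegularOfDegree d) {u v : V}
    (huv : G.Adj u v) : ((G.deleteEdges {s(u, v)}).incidenceSet v).ncard = d - 1 := by
  classical
  have hdel : (G.deleteEdges {s(u, v)}).incidenceSet v = G.incidenceSet v \ {s(u, v)} := by
    ext e
    simp only [incidenceSet, edgeSet_deleteEdges, Set.mem_sdiff, Set.mem_ofPred_eq]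
    tauto
  have huv_mem : s(u, v) ∈ G.incidenceSet v := ⟨huv, Sym2.mem_mk_right u v⟩
  rw [hdel, Set.ncard_sdiff_singleton_of_mem huv_mem,
    Set.ncard_eq_toFinset_card', Set.toFinset_card, G.card_incidenceSet_eq_degree, hreg v]

/-- `spoke v 0 = v'v`, `spoke v 1 = v'v''`, `spoke v 2 = v'v'''`. -/
def spoke (v : V) : Fin 3 → Sym2 (V ⊕ Fin 3) :=
  ![s(.inr 0, .inl v), s(.inr 0, .inr 1), s(.inr 0, .inr 2)]

lemma inl_mem_spoke_iff {a v : V} {k : Fin 3} : Sum.inl a ∈ spoke v k ↔ k = 0 ∧ a = v := by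
  fin_cases k <;> simp [spoke]

lemma inr_mem_spoke_iff {v : V} {j k : Fin 3} : Sum.inr j ∈ spoke v k ↔ j = 0 ∨ j = k := by
  fin_cases j <;> fin_cases k <;> simp [spoke]

lemma spoke_injective (v : V) : Function.Injective (spoke v) := by
  intro j k h
  fin_cases j <;> fin_cases k <;> simp_all [spoke]

lemma inr_notMem_map_inl (k : Fin 3) (y : Sym2 V) : (Sum.inr k : V ⊕ Fin 3) ∉ y.map Sum.inl := by
  simp [Sym2.mem_map]

lemma modifiedGraph_adj_inl_inl {G : SimpleGraph V} {u v a b : V} :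
    (modifiedGraph G u v).Adj (.inl a) (.inl b) ↔ (G.deleteEdges {s(u, v)}).Adj a b := by
  simp only [modifiedGraph, fromRel_adj, deleteEdges_adj, Set.mem_singleton_iff, ne_eq,
    Sum.inl.injEq]
  rw [Sym2.eq_swap (a := b), G.adj_comm b a, or_self]
  exact ⟨And.right, fun h => ⟨h.1.ne, h⟩⟩

lemma edgeSet_modifiedGraph (G : SimpleGraph V) (u v : V) :
    (modifiedGraph G u v).edgeSet =
      Sym2.map Sum.inl '' (G.deleteEdges {s(u, v)}).edgeSet ∪ Set.range (spoke v) := by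
  ext x
  constructor
  · intro hx
    induction x using Sym2.ind with
    | _ p q =>
      rcases p with a | j <;> rcases q with b | k
      · exact Or.inl ⟨s(a, b), modifiedGraph_adj_inl_inl.1 hx, rfl⟩
      · obtain ⟨rfl, rfl⟩ : a = v ∧ k = 0 := by simpa [modifiedGraph] using hx
        exact Or.inr ⟨0, Sym2.eq_swap⟩
      · obtain ⟨rfl, rfl⟩ : b = v ∧ j = 0 := by simpa [modifiedGraph] using hx
        exact Or.inr ⟨0, rfl⟩
      · right
        fin_cases j <;> fin_cases k <;> simp_all [modifiedGraph, spoke]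
  · rintro (⟨y, hy, rfl⟩ | ⟨k, rfl⟩)
    · induction y using Sym2.ind with
      | _ a b => exact modifiedGraph_adj_inl_inl.2 hy
    · fin_cases k <;> simp [spoke, modifiedGraph]

lemma spoke_mem_edgeSet (G : SimpleGraph V) (u v : V) (k : Fin 3) :
    spoke v k ∈ (modifiedGraph G u v).edgeSet := by
  rw [edgeSet_modifiedGraph]
  exact Or.inr ⟨k, rfl⟩

lemma exists_eq_spoke_of_inr_mem {G : SimpleGraph V} {u v : V} {x : Sym2 (V ⊕ Fin 3)}
    (hx : x ∈ (modifiedGraph G u v).edgeSet) {j : Fin 3} (hj : Sum.inr j ∈ x) :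
    ∃ k, x = spoke v k ∧ (j = 0 ∨ j = k) := by
  rw [edgeSet_modifiedGraph] at hx
  rcases hx with ⟨y, -, rfl⟩ | ⟨k, rfl⟩
  · exact absurd hj (inr_notMem_map_inl j y)
  · exact ⟨k, rfl, inr_mem_spoke_iff.1 hj⟩

def modifiedGraphInl (G : SimpleGraph V) (u v : V) :
    G.deleteEdges {s(u, v)} →g modifiedGraph G u v :=
  ⟨Sum.inl, modifiedGraph_adj_inl_inl.2⟩

section LowerBound

variable {G : SimpleGraph V} {u v : V} {t : ℕ} {P : Fin t → Set (Sym2 (V ⊕ Fin 3))}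

lemma IsRegularPartition.exists_injective_spokes
    (hP : IsRegularPartition (modifiedGraph G u v) P) :
    ∃ ι : Fin 3 → Fin t, Function.Injective ι ∧ ∀ k, IsRegularEdgeSet (P (ι k)) 1 := by
  choose ι hι using fun k => hP.exists_mem (spoke_mem_edgeSet G u v k)
  have hhub : ∀ k, (Sum.inr 0 : V ⊕ Fin 3) ∈ spoke v k := fun _ =>
    inr_mem_spoke_iff.2 (Or.inl rfl)
  have hleaf : ∀ k ≠ 0, IsRegularEdgeSet (P (ι k)) 1 := by
    intro k hk
    refine hP.isRegularEdgeSet_one_of_unique (hι k) (inr_mem_spoke_iff.2 (Or.inr rfl)) ?_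
    intro e he hw
    obtain ⟨k', rfl, hk'⟩ := exists_eq_spoke_of_inr_mem (hP.mem_edgeSet he) hw
    rw [hk'.resolve_left hk]
  have hinj_leaf : ∀ j k, k ≠ 0 → ι j = ι k → j = k := fun j k hk h =>
    spoke_injective v ((hleaf k hk).eq_of_mem_of_mem (h ▸ hι j) (hι k) (hhub j) (hhub k))
  have hinj : Function.Injective ι := by
    intro j k h
    by_cases hk : k = 0
    · by_cases hj : j = 0
      · rw [hj, hk]
      · exact (hinj_leaf k j hj h.symm).symm
    · exact hinj_leaf j k hk h
  refine ⟨ι, hinj, fun k => ?_⟩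
  by_cases hk : k = 0
  · refine hP.isRegularEdgeSet_one_of_unique (hι k) (hhub k) fun e he hw => ?_
    obtain ⟨k', rfl, -⟩ := exists_eq_spoke_of_inr_mem (hP.mem_edgeSet he) hw
    rw [hinj (hP.eq_of_mem_of_mem (hι k') he)]
  · exact hleaf k hk

lemma IsRegularPartition.three_le_of_modifiedGraph
    (hP : IsRegularPartition (modifiedGraph G u v) P) : 3 ≤ t := by
  obtain ⟨ι, hι, -⟩ := hP.exists_injective_spokes
  simpa using Fintype.card_le_of_injective ι hι

lemma IsRegularPartition.isRegularEdgeSet_one_of_modifiedGraph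
    {P : Fin 3 → Set (Sym2 (V ⊕ Fin 3))} (hP : IsRegularPartition (modifiedGraph G u v) P)
    (i : Fin 3) : IsRegularEdgeSet (P i) 1 := by
  obtain ⟨ι, hι, hmatch⟩ := hP.exists_injective_spokes
  obtain ⟨k, rfl⟩ := Finite.injective_iff_surjective.1 hι i
  exact hmatch k

end LowerBound

/-- The edge `spoke v k` gets colour `c + k`. -/
def extendColoring (C : Sym2 V → Fin 3) (c : Fin 3) : Sym2 (V ⊕ Fin 3) → Fin 3 :=
  Sym2.lift ⟨fun p q => match p, q with
    | .inl a, .inl b => C s(a, b)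
    | .inl _, .inr k => c + k
    | .inr k, .inl _ => c + k
    | .inr j, .inr k => c + j + k, by
      rintro (a | j) (b | k) <;> simp [Sym2.eq_swap, add_right_comm]⟩

lemma extendColoring_map_inl (C : Sym2 V → Fin 3) (c : Fin 3) (y : Sym2 V) :
    extendColoring C c (y.map Sum.inl) = C y := by
  induction y using Sym2.ind with
  | _ a b => rfl

lemma extendColoring_spoke (C : Sym2 V → Fin 3) (c : Fin 3) (v : V) (k : Fin 3) :
    extendColoring C c (spoke v k) = c + k := by
  fin_cases k <;> simp [extendColoring, spoke]

lemma isProperEdgeColoring_extendColoring {G : SimpleGraph V} {u v : V} {C : Sym2 V → Fin 3}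
    (hC : IsProperEdgeColoring (G.deleteEdges {s(u, v)}) C) {c : Fin 3}
    (hc : ∀ e ∈ (G.deleteEdges {s(u, v)}).incidenceSet v, C e ≠ c) :
    IsProperEdgeColoring (modifiedGraph G u v) (extendColoring C c) := by
  have hmeet : ∀ y ∈ (G.deleteEdges {s(u, v)}).edgeSet, ∀ k, ∀ x ∈ y.map Sum.inl,
      x ∈ spoke v k → C y ≠ c + k := by
    intro y hy k x hx hxk
    obtain ⟨a, ha, rfl⟩ := Sym2.mem_map.1 hx
    obtain ⟨rfl, rfl⟩ := inl_mem_spoke_iff.1 hxk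
    simpa using hc y ⟨hy, ha⟩
  rw [IsProperEdgeColoring, edgeSet_modifiedGraph]
  rintro _ (⟨y₁, hy₁, rfl⟩ | ⟨k₁, rfl⟩) _ (⟨y₂, hy₂, rfl⟩ | ⟨k₂, rfl⟩) hne ⟨x, hx₁, hx₂⟩ <;>
    simp only [extendColoring_map_inl, extendColoring_spoke]
  · obtain ⟨a, ha₁, rfl⟩ := Sym2.mem_map.1 hx₁
    obtain ⟨b, hb₂, hba⟩ := Sym2.mem_map.1 hx₂
    exact hC y₁ hy₁ y₂ hy₂ (fun h => hne (h ▸ rfl)) ⟨a, ha₁, Sum.inl_injective hba ▸ hb₂⟩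
  · exact hmeet y₁ hy₁ k₂ x hx₁ hx₂
  · exact (hmeet y₂ hy₂ k₁ x hx₂ hx₁).symm
  · exact fun h => hne (congrArg _ (add_left_cancel h))

lemma exists_extendColoring_eq (G : SimpleGraph V) (u v : V) (C : Sym2 V → Fin 3)
    (c i : Fin 3) :
    ∃ e ∈ (modifiedGraph G u v).edgeSet, extendColoring C c e = i :=
  ⟨spoke v (i - c), spoke_mem_edgeSet G u v _, by rw [extendColoring_spoke, add_sub_cancel]⟩

/-- for a cubic graph `G` with an edge `uv`, the modified graph `G'`
has regular number `3` iff `G - uv` has a proper edge coloring with `3` colors. -/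
theorem regNum_modifiedGraph_eq_three_iff [Fintype V] (G : SimpleGraph V) [DecidableRel G.Adj]
    (hreg : G.IsRegularOfDegree 3) (u v : V) (huv : G.Adj u v) :
    regNum (modifiedGraph G u v) = 3 ↔
      ∃ C : Sym2 V → Fin 3, IsProperEdgeColoring (G.deleteEdges {s(u, v)}) C := by
  constructor
  · intro h
    obtain ⟨P, hP⟩ := exists_isRegularPartition_of_regNum_eq h three_pos
    obtain ⟨C, hC⟩ := hP.exists_isProperEdgeColoring hP.isRegularEdgeSet_one_of_modifiedGraph
    exact ⟨_, hC.comp_map (modifiedGraphInl G u v) Sum.inl_injective⟩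
  · rintro ⟨C, hC⟩
    obtain ⟨c, hc⟩ := exists_ne_of_ncard_incidenceSet_lt C
      (by rw [hreg.ncard_incidenceSet_deleteEdges huv]; norm_num)
    have hC' := isProperEdgeColoring_extendColoring hC hc
    have hsurj := exists_extendColoring_eq G u v C c
    exact le_antisymm (regNum_le_of_isProperEdgeColoring hC' hsurj)
      (le_csInf ⟨3, _, hC'.isRegularPartition hsurj⟩ fun _ ⟨_, hP⟩ =>
        hP.three_le_of_modifiedGraph)
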